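/- arXiv:2504.14570 — 3 statements merged into one kernel-verified Lean document; each statement's English description precedes it below -/
import Mathlib

section
/- Let k > 0 and let R̃ : ℝ → M₃(ℝ) be differentiable with R̃(t) ∈ SO(3) for all t, satisfying the error kinematics R̃'(t) = −k · σ(t)× · R̃(t), where σ(t) = vex(Pₐ(R̃(t))). Then the Lyapunov function E(t) = ½ tr(I − R̃(t)) satisfies the scalar differential equation E'(t) = −k · E(t) · (2 − E(t)) for all t. -/
open Matrix

/-- Membership in `SO(3)`: `RᵀR = I` and `det R = 1`. -/
def SO3 (R : Matrix (Fin 3) (Fin 3) ℝ) : Prop :=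
  Rᵀ * R = 1 ∧ R.det = 1

/-- The skew-symmetric matrix `ω×` associated to `ω ∈ ℝ³`. -/
def skew (ω : Fin 3 → ℝ) : Matrix (Fin 3) (Fin 3) ℝ :=
  !![0, -ω 2, ω 1; ω 2, 0, -ω 0; -ω 1, ω 0, 0]

/-- Antisymmetric projection `Pₐ(A) = ½(A − Aᵀ)`. -/
noncomputable def Pa (A : Matrix (Fin 3) (Fin 3) ℝ) : Matrix (Fin 3) (Fin 3) ℝ :=
  (1 / 2 : ℝ) • (A - Aᵀ)

/-- The `vex` operator, inverse of `ω ↦ ω×` on skew-symmetric matrices. -/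
def vex (A : Matrix (Fin 3) (Fin 3) ℝ) : Fin 3 → ℝ :=
  ![A 2 1, A 0 2, A 1 0]

/-- Along solutions of the complementary-filter error kinematics
`R̃' = −k σ× R̃` with `σ = vex(Pₐ(R̃))`, the Lyapunov function
`E = ½ tr(I − R̃)` satisfies `E' = −k E (2 − E)`. -/
theorem lyapunov_ode (k : ℝ) (hk : 0 < k)
    (Rt : ℝ → Matrix (Fin 3) (Fin 3) ℝ)
    (hSO : ∀ t, SO3 (Rt t))
    (hderiv : ∀ t, ∀ i j, HasDerivAt (fun s => Rt s i j)
      ((-(k • skew (vex (Pa (Rt t)))) * Rt t) i j) t) :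
    ∀ t, HasDerivAt (fun s => (1 / 2 : ℝ) * (1 - Rt s).trace)
      (-k * ((1 / 2 : ℝ) * (1 - Rt t).trace) *
        (2 - (1 / 2 : ℝ) * (1 - Rt t).trace)) t := by
  intro t
  set R := Rt t with hR
  obtain ⟨horth, hdet⟩ := hSO t
  -- adjugate R = Rᵀ
  have hRRT : R * Rᵀ = 1 := mul_eq_one_comm.mp horth
  have hadj : R.adjugate = Rᵀ := by
    have h1 : R * R.adjugate = 1 := by rw [Matrix.mul_adjugate, hdet, one_smul]
    calc R.adjugate = 1 * R.adjugate := (one_mul _).symm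
      _ = Rᵀ * (R * R.adjugate) := by rw [← horth, mul_assoc]
      _ = Rᵀ := by rw [h1, mul_one]
  -- entrywise cofactor equations
  have hcof := fun i j => congrFun (congrFun (hadj.symm.trans (adjugate_fin_three R)) i) j
  have ca := hcof 0 0; have ce := hcof 1 1; have ci := hcof 2 2
  simp only [transpose_apply, Matrix.cons_val', Matrix.cons_val_zero, Matrix.cons_val_one,
    Matrix.head_cons, Matrix.head_fin_const, Matrix.empty_val', Matrix.cons_val_fin_one,
    Matrix.cons_val_two, Matrix.tail_cons] at ca ce ci
  -- column norm equations
  have hc := fun i j => congrFun (congrFun horth i) j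
  have c1 := hc 0 0; have c2 := hc 1 1; have c3 := hc 2 2
  simp only [Matrix.mul_apply, Fin.sum_univ_three, transpose_apply, Matrix.one_apply_eq] at c1 c2 c3
  -- derivative
  have h00 := hderiv t 0 0
  have h11 := hderiv t 1 1
  have h22 := hderiv t 2 2
  have hsum := (h00.add h11).add h22
  have key : (fun s => (1 / 2 : ℝ) * (1 - Rt s).trace)
      = fun s => (1/2:ℝ) * (3 - (Rt s 0 0 + Rt s 1 1 + Rt s 2 2)) := by
    funext s
    simp [Matrix.trace, Matrix.diag, Fin.sum_univ_three, Matrix.sub_apply, Matrix.one_apply]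
  rw [key]
  have h := ((hasDerivAt_const t (3:ℝ)).sub hsum).const_mul (1/2 : ℝ)
  refine h.congr_deriv ?_
  simp only [Matrix.mul_apply, Fin.sum_univ_three, Matrix.neg_apply, Matrix.smul_apply,
    smul_eq_mul] at *
  simp [Matrix.trace, Matrix.diag, Fin.sum_univ_three, Matrix.sub_apply, Matrix.one_apply,
    skew, vex, Pa, Matrix.sub_apply, Matrix.smul_apply] at *
  rw [hR] at ca ce ci
  linear_combination -(k/4)*(c1+c2+c3) + (k/2)*(ca+ce+ci)
end

section
/- Let k > 0 and let R̃ : ℝ → M₃(ℝ) be differentiable with R̃(t) ∈ SO(3) for all t ≥ 0, satisfying R̃'(t) = −k · σ(t)× · R̃(t) with σ(t) = vex(Pₐ(R̃(t))), and set E(t) = ½ tr(I − R̃(t)). If E(0) < 2 (equivalently tr R̃(0) > −1, i.e., R̃(0) ∉ U₀), then for all t ≥ 0, E(t) ≤ E(0) · exp(−k (2 − E(0)) t); in particular R̃(t) → I as t → ∞. -/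
open Matrix

/-- The Lyapunov function `E(t) = ½ tr(I − R̃(t))`. -/
noncomputable def Efun (Rt : ℝ → Matrix (Fin 3) (Fin 3) ℝ) (t : ℝ) : ℝ :=
  (1 / 2 : ℝ) * (1 - Rt t).trace

noncomputable def sigSq (R : Matrix (Fin 3) (Fin 3) ℝ) : ℝ :=
  (vex (Pa R) 0)^2 + (vex (Pa R) 1)^2 + (vex (Pa R) 2)^2

lemma sigSq_nonneg (R : Matrix (Fin 3) (Fin 3) ℝ) : 0 ≤ sigSq R := by
  unfold sigSq; positivity

lemma orth_cols (R : Matrix (Fin 3) (Fin 3) ℝ) (h : Rᵀ * R = 1) :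
    (R 0 0 * R 0 0 + R 1 0 * R 1 0 + R 2 0 * R 2 0 = 1) ∧
    (R 0 1 * R 0 1 + R 1 1 * R 1 1 + R 2 1 * R 2 1 = 1) ∧
    (R 0 2 * R 0 2 + R 1 2 * R 1 2 + R 2 2 * R 2 2 = 1) := by
  refine ⟨?_, ?_, ?_⟩
  · have := congrFun (congrFun h 0) 0
    simpa [Matrix.mul_apply, Fin.sum_univ_three, Matrix.one_apply] using this
  · have := congrFun (congrFun h 1) 1
    simpa [Matrix.mul_apply, Fin.sum_univ_three, Matrix.one_apply] using this
  · have := congrFun (congrFun h 2) 2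
    simpa [Matrix.mul_apply, Fin.sum_univ_three, Matrix.one_apply] using this

lemma adj_eq (R : Matrix (Fin 3) (Fin 3) ℝ) (h : SO3 R) : R.adjugate = Rᵀ := by
  have h1 := Matrix.mul_adjugate R
  rw [h.2, one_smul] at h1
  calc R.adjugate = (Rᵀ * R) * R.adjugate := by rw [h.1, one_mul]
    _ = Rᵀ * (R * R.adjugate) := by rw [Matrix.mul_assoc]
    _ = Rᵀ := by rw [h1, Matrix.mul_one]

lemma sig_identity (R : Matrix (Fin 3) (Fin 3) ℝ) (h : SO3 R) :
    sigSq R = ((1/2:ℝ) * (1 - R).trace) * (2 - (1/2:ℝ) * (1 - R).trace) := by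
  have hadj := adj_eq R h
  rw [Matrix.adjugate_fin_three] at hadj
  have c0 : R 1 1 * R 2 2 - R 1 2 * R 2 1 = R 0 0 := by
    have := congrFun (congrFun hadj 0) 0; simpa using this
  have c1 : R 0 0 * R 2 2 - R 0 2 * R 2 0 = R 1 1 := by
    have := congrFun (congrFun hadj 1) 1; simpa using this
  have c2 : R 0 0 * R 1 1 - R 0 1 * R 1 0 = R 2 2 := by
    have := congrFun (congrFun hadj 2) 2; simpa using this
  obtain ⟨o0, o1, o2⟩ := orth_cols R h.1
  simp only [sigSq, vex, Pa, Matrix.trace, Matrix.diag, Fin.sum_univ_three,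
    Matrix.sub_apply, Matrix.smul_apply, Matrix.transpose_apply, Matrix.one_apply,
    Matrix.cons_val_zero, Matrix.cons_val_one, Matrix.head_cons, smul_eq_mul,
    Matrix.cons_val_two, Matrix.tail_cons]
  norm_num
  linear_combination (1/4) * o0 + (1/4) * o1 + (1/4) * o2
    + (1/2) * c0 + (1/2) * c1 + (1/2) * c2

lemma trace_deriv_identity (kk : ℝ) (R : Matrix (Fin 3) (Fin 3) ℝ) :
    (1/2 : ℝ) * (-(((-(kk • skew (vex (Pa R)))) * R) 0 0
      + ((-(kk • skew (vex (Pa R)))) * R) 1 1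
      + ((-(kk • skew (vex (Pa R)))) * R) 2 2)) = -kk * sigSq R := by
  simp only [sigSq, vex, Pa, skew, Matrix.mul_apply, Fin.sum_univ_three,
    Matrix.neg_apply, Matrix.smul_apply, Matrix.sub_apply, Matrix.transpose_apply,
    Matrix.cons_val', Matrix.cons_val_zero, Matrix.cons_val_one, Matrix.head_cons,
    Matrix.empty_val', Matrix.cons_val_fin_one, Matrix.head_fin_const,
    Matrix.cons_val_two, Matrix.tail_cons, smul_eq_mul, Matrix.of_apply]
  ring

lemma Efun_eq (Rt : ℝ → Matrix (Fin 3) (Fin 3) ℝ) :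
    Efun Rt = fun s => (1/2 : ℝ) * (3 - (Rt s 0 0 + Rt s 1 1 + Rt s 2 2)) := by
  funext s
  simp [Efun, Matrix.trace, Matrix.diag, Fin.sum_univ_three, Matrix.sub_apply,
    Matrix.one_apply]

lemma E_nonneg (R : Matrix (Fin 3) (Fin 3) ℝ) (h : SO3 R) :
    0 ≤ (1/2 : ℝ) * (1 - R).trace := by
  obtain ⟨o0, o1, o2⟩ := orth_cols R h.1
  have h0 : R 0 0 ≤ 1 := by nlinarith [sq_nonneg (R 1 0), sq_nonneg (R 2 0)]
  have h1 : R 1 1 ≤ 1 := by nlinarith [sq_nonneg (R 0 1), sq_nonneg (R 2 1)]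
  have h2 : R 2 2 ≤ 1 := by nlinarith [sq_nonneg (R 0 2), sq_nonneg (R 1 2)]
  have : (1 - R).trace = 3 - (R 0 0 + R 1 1 + R 2 2) := by
    simp [Matrix.trace, Matrix.diag, Fin.sum_univ_three, Matrix.sub_apply,
      Matrix.one_apply]
  rw [this]; linarith

lemma sum_sq_eq (R : Matrix (Fin 3) (Fin 3) ℝ) (h : Rᵀ * R = 1) :
    (R 0 0 - 1)^2 + (R 0 1)^2 + (R 0 2)^2 + (R 1 0)^2 + (R 1 1 - 1)^2 + (R 1 2)^2
      + (R 2 0)^2 + (R 2 1)^2 + (R 2 2 - 1)^2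
    = 4 * ((1/2:ℝ) * (1 - R).trace) := by
  obtain ⟨o0, o1, o2⟩ := orth_cols R h
  have : (1 - R).trace = 3 - (R 0 0 + R 1 1 + R 2 2) := by
    simp [Matrix.trace, Matrix.diag, Fin.sum_univ_three, Matrix.sub_apply,
      Matrix.one_apply]
  rw [this]
  linear_combination o0 + o1 + o2

lemma entry_sq_le (R : Matrix (Fin 3) (Fin 3) ℝ) (h : Rᵀ * R = 1) (i j : Fin 3) :
    (R i j - (1 : Matrix (Fin 3) (Fin 3) ℝ) i j)^2 ≤ 4 * ((1/2:ℝ) * (1 - R).trace) := by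
  have hsum := sum_sq_eq R h
  have htr : (1 - R).trace = 3 - (R 0 0 + R 1 1 + R 2 2) := by
    simp [Matrix.trace, Matrix.diag, Fin.sum_univ_three, Matrix.sub_apply,
      Matrix.one_apply]
  rw [htr] at hsum ⊢
  have n00 := sq_nonneg (R 0 0 - 1); have n11 := sq_nonneg (R 1 1 - 1)
  have n22 := sq_nonneg (R 2 2 - 1); have n01 := sq_nonneg (R 0 1)
  have n02 := sq_nonneg (R 0 2); have n10 := sq_nonneg (R 1 0)
  have n12 := sq_nonneg (R 1 2); have n20 := sq_nonneg (R 2 0)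
  have n21 := sq_nonneg (R 2 1)
  have b00 : (R 0 0 - 1)^2 ≤ 4 * ((1/2:ℝ) * (3 - (R 0 0 + R 1 1 + R 2 2))) := by linarith
  have b11 : (R 1 1 - 1)^2 ≤ 4 * ((1/2:ℝ) * (3 - (R 0 0 + R 1 1 + R 2 2))) := by linarith
  have b22 : (R 2 2 - 1)^2 ≤ 4 * ((1/2:ℝ) * (3 - (R 0 0 + R 1 1 + R 2 2))) := by linarith
  have b01 : (R 0 1)^2 ≤ 4 * ((1/2:ℝ) * (3 - (R 0 0 + R 1 1 + R 2 2))) := by linarith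
  have b02 : (R 0 2)^2 ≤ 4 * ((1/2:ℝ) * (3 - (R 0 0 + R 1 1 + R 2 2))) := by linarith
  have b10 : (R 1 0)^2 ≤ 4 * ((1/2:ℝ) * (3 - (R 0 0 + R 1 1 + R 2 2))) := by linarith
  have b12 : (R 1 2)^2 ≤ 4 * ((1/2:ℝ) * (3 - (R 0 0 + R 1 1 + R 2 2))) := by linarith
  have b20 : (R 2 0)^2 ≤ 4 * ((1/2:ℝ) * (3 - (R 0 0 + R 1 1 + R 2 2))) := by linarith
  have b21 : (R 2 1)^2 ≤ 4 * ((1/2:ℝ) * (3 - (R 0 0 + R 1 1 + R 2 2))) := by linarith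
  fin_cases i <;> fin_cases j
  · show (R 0 0 - (1 : Matrix (Fin 3) (Fin 3) ℝ) 0 0)^2 ≤ _
    rw [Matrix.one_apply_eq]; exact b00
  · show (R 0 1 - (1 : Matrix (Fin 3) (Fin 3) ℝ) 0 1)^2 ≤ _
    rw [Matrix.one_apply_ne (by decide), sub_zero]; exact b01
  · show (R 0 2 - (1 : Matrix (Fin 3) (Fin 3) ℝ) 0 2)^2 ≤ _
    rw [Matrix.one_apply_ne (by decide), sub_zero]; exact b02
  · show (R 1 0 - (1 : Matrix (Fin 3) (Fin 3) ℝ) 1 0)^2 ≤ _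
    rw [Matrix.one_apply_ne (by decide), sub_zero]; exact b10
  · show (R 1 1 - (1 : Matrix (Fin 3) (Fin 3) ℝ) 1 1)^2 ≤ _
    rw [Matrix.one_apply_eq]; exact b11
  · show (R 1 2 - (1 : Matrix (Fin 3) (Fin 3) ℝ) 1 2)^2 ≤ _
    rw [Matrix.one_apply_ne (by decide), sub_zero]; exact b12
  · show (R 2 0 - (1 : Matrix (Fin 3) (Fin 3) ℝ) 2 0)^2 ≤ _
    rw [Matrix.one_apply_ne (by decide), sub_zero]; exact b20
  · show (R 2 1 - (1 : Matrix (Fin 3) (Fin 3) ℝ) 2 1)^2 ≤ _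
    rw [Matrix.one_apply_ne (by decide), sub_zero]; exact b21
  · show (R 2 2 - (1 : Matrix (Fin 3) (Fin 3) ℝ) 2 2)^2 ≤ _
    rw [Matrix.one_apply_eq]; exact b22


/-- Almost-global exponential convergence: along the error kinematics
`R̃' = −k σ× R̃` with `σ = vex(Pₐ(R̃))`, if `E(0) < 2` (i.e. `tr R̃(0) > −1`,
so `R̃(0) ∉ U₀`), then `E(t) ≤ E(0) exp(−k (2 − E(0)) t)` for all `t ≥ 0`,
and `R̃(t) → I` as `t → ∞`. -/
theorem almost_global_convergence (k : ℝ) (hk : 0 < k)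
    (Rt : ℝ → Matrix (Fin 3) (Fin 3) ℝ)
    (hSO : ∀ t, 0 ≤ t → SO3 (Rt t))
    (hderiv : ∀ t, 0 ≤ t → ∀ i j, HasDerivAt (fun s => Rt s i j)
      ((-(k • skew (vex (Pa (Rt t)))) * Rt t) i j) t)
    (hE0 : Efun Rt 0 < 2) :
    (∀ t, 0 ≤ t → Efun Rt t ≤ Efun Rt 0 * Real.exp (-k * (2 - Efun Rt 0) * t)) ∧
      Filter.Tendsto Rt Filter.atTop (nhds 1) := by
  have hEder : ∀ t, 0 ≤ t → HasDerivAt (Efun Rt) (-k * sigSq (Rt t)) t := by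
    intro t ht
    have hsum := ((hderiv t ht 0 0).add (hderiv t ht 1 1)).add (hderiv t ht 2 2)
    have h2 := (hsum.const_sub 3).const_mul (1/2 : ℝ)
    rw [Efun_eq Rt]
    rw [← trace_deriv_identity k (Rt t)]
    exact h2
  have hsig : ∀ t, 0 ≤ t → sigSq (Rt t) = Efun Rt t * (2 - Efun Rt t) := by
    intro t ht
    exact sig_identity _ (hSO t ht)
  have hEnn : ∀ t, 0 ≤ t → 0 ≤ Efun Rt t := fun t ht => E_nonneg _ (hSO t ht)
  have hcont : ContinuousOn (Efun Rt) (Set.Ici 0) := fun t ht =>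
    (hEder t ht).continuousAt.continuousWithinAt
  have hdiff : DifferentiableOn ℝ (Efun Rt) (interior (Set.Ici (0:ℝ))) := by
    rw [interior_Ici]
    exact fun x hx => (hEder x (le_of_lt hx)).differentiableAt.differentiableWithinAt
  have hderivE : ∀ x ∈ interior (Set.Ici (0:ℝ)), deriv (Efun Rt) x ≤ 0 := by
    rw [interior_Ici]
    intro x hx
    rw [(hEder x (le_of_lt hx)).deriv]
    have := sigSq_nonneg (Rt x)
    nlinarith
  have hanti : AntitoneOn (Efun Rt) (Set.Ici 0) :=
    antitoneOn_of_deriv_nonpos (convex_Ici 0) hcont hdiff hderivE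
  have hEle : ∀ t, 0 ≤ t → Efun Rt t ≤ Efun Rt 0 := fun t ht =>
    hanti Set.self_mem_Ici ht ht
  set c : ℝ := 2 - Efun Rt 0 with hc
  have hcpos : 0 < c := by simp [hc]; linarith
  set g : ℝ → ℝ := fun t => Efun Rt t * Real.exp (k * c * t) with hg
  have hexp : ∀ t : ℝ, HasDerivAt (fun s => Real.exp (k * c * s))
      (k * c * Real.exp (k * c * t)) t := by
    intro t
    have := ((hasDerivAt_id t).const_mul (k * c)).exp
    simpa [mul_comm] using this
  have hgder : ∀ t, 0 ≤ t → HasDerivAt g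
      ((-k * sigSq (Rt t)) * Real.exp (k * c * t)
        + Efun Rt t * (k * c * Real.exp (k * c * t))) t := by
    intro t ht
    exact (hEder t ht).mul (hexp t)
  have hgcont : ContinuousOn g (Set.Ici 0) := fun t ht =>
    (hgder t ht).continuousAt.continuousWithinAt
  have hgdiff : DifferentiableOn ℝ g (interior (Set.Ici (0:ℝ))) := by
    rw [interior_Ici]
    exact fun x hx => (hgder x (le_of_lt hx)).differentiableAt.differentiableWithinAt
  have hgderiv : ∀ x ∈ interior (Set.Ici (0:ℝ)), deriv g x ≤ 0 := by
    rw [interior_Ici]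
    intro x hx
    have hx' := le_of_lt (show (0:ℝ) < x from hx)
    rw [(hgder x hx').deriv, hsig x hx']
    have h1 := hEnn x hx'
    have h2 := hEle x hx'
    have h3 := Real.exp_pos (k * c * x)
    have heq : -k * (Efun Rt x * (2 - Efun Rt x)) * Real.exp (k * c * x)
        + Efun Rt x * (k * c * Real.exp (k * c * x))
        = (k * Real.exp (k * c * x) * Efun Rt x) * (Efun Rt x - Efun Rt 0) := by
      rw [hc]; ring
    rw [heq]
    exact mul_nonpos_of_nonneg_of_nonpos
      (mul_nonneg (mul_nonneg hk.le h3.le) h1) (by linarith)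
  have hganti : AntitoneOn g (Set.Ici 0) :=
    antitoneOn_of_deriv_nonpos (convex_Ici 0) hgcont hgdiff hgderiv
  have hmain : ∀ t, 0 ≤ t → Efun Rt t ≤ Efun Rt 0 * Real.exp (-(k * c * t)) := by
    intro t ht
    have hgle : g t ≤ g 0 := hganti Set.self_mem_Ici ht ht
    have hg0 : g 0 = Efun Rt 0 := by simp [hg]
    rw [hg0] at hgle
    have hepos : (0:ℝ) < Real.exp (k * c * t) := Real.exp_pos _
    have h' : Efun Rt t * Real.exp (k * c * t) ≤ Efun Rt 0 := hgle
    rw [Real.exp_neg, ← div_eq_mul_inv, le_div_iff₀ hepos]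
    exact h'
  constructor
  · intro t ht
    have := hmain t ht
    have heq : -k * (2 - Efun Rt 0) * t = -(k * c * t) := by rw [hc]; ring
    rw [heq]
    exact this
  · -- convergence
    have htend1 : Filter.Tendsto (fun t => k * c * t) Filter.atTop Filter.atTop :=
      Filter.Tendsto.const_mul_atTop (by positivity) Filter.tendsto_id
    have htend2 : Filter.Tendsto (fun t => Real.exp (-(k * c * t)))
        Filter.atTop (nhds 0) :=
      Real.tendsto_exp_neg_atTop_nhds_zero.comp htend1
    have htendB : Filter.Tendsto (fun t => Efun Rt 0 * Real.exp (-(k * c * t)))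
        Filter.atTop (nhds 0) := by
      simpa using htend2.const_mul (Efun Rt 0)
    have hEtend : Filter.Tendsto (Efun Rt) Filter.atTop (nhds 0) := by
      apply squeeze_zero' (Filter.eventually_atTop.2 ⟨0, hEnn⟩)
        (Filter.eventually_atTop.2 ⟨0, hmain⟩) htendB
    have hsqrt : Filter.Tendsto (fun t => 2 * Real.sqrt (Efun Rt t))
        Filter.atTop (nhds 0) := by
      have : Filter.Tendsto (fun t => Real.sqrt (Efun Rt t)) Filter.atTop (nhds 0) := by
        have := (Real.continuous_sqrt.tendsto 0).comp hEtend
        simpa [Function.comp_def] using this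
      simpa using this.const_mul 2
    have hentry : ∀ i j, Filter.Tendsto (fun t => Rt t i j) Filter.atTop
        (nhds ((1 : Matrix (Fin 3) (Fin 3) ℝ) i j)) := by
      intro i j
      rw [tendsto_iff_dist_tendsto_zero]
      apply squeeze_zero' (Filter.Eventually.of_forall fun t => dist_nonneg)
        (Filter.eventually_atTop.2 ⟨0, ?_⟩) hsqrt
      intro t ht
      have hsq : (Rt t i j - (1 : Matrix (Fin 3) (Fin 3) ℝ) i j)^2 ≤ 4 * Efun Rt t :=
        entry_sq_le (Rt t) (hSO t ht).1 i j
      rw [Real.dist_eq, ← Real.sqrt_sq_eq_abs]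
      calc Real.sqrt ((Rt t i j - (1 : Matrix (Fin 3) (Fin 3) ℝ) i j)^2)
          ≤ Real.sqrt (4 * Efun Rt t) := Real.sqrt_le_sqrt hsq
        _ = 2 * Real.sqrt (Efun Rt t) := by
            rw [show (4:ℝ) = 2^2 by norm_num, Real.sqrt_mul (by positivity),
              Real.sqrt_sq (by norm_num : (0:ℝ) ≤ 2)]
    refine tendsto_pi_nhds.2 ?_
    intro i
    rw [tendsto_pi_nhds]
    intro j
    exact hentry i j
end

section
/- Let k > 0 and let R̃ : ℝ → M₃(ℝ) be differentiable with R̃(t) ∈ SO(3) for all t ≥ 0, satisfying R̃'(t) = −k · σ(t)× · R̃(t) with σ(t) = vex(Pₐ(R̃(t))). If tr R̃(0) = −1, then tr R̃(t) = −1 for all t ≥ 0; that is, the unstable set U₀ = {R ∈ SO(3) : tr R = −1} is invariant under the error flow. -/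
open Matrix

lemma trace_rhs_key (k : ℝ) (R : Matrix (Fin 3) (Fin 3) ℝ) (hR : SO3 R) :
    ((-(k • skew (vex (Pa R)))) * R).trace = k/2 * (3 - R.trace) * (1 + R.trace) := by
  obtain ⟨ho, hd⟩ := hR
  have hadj : adjugate R = Rᵀ := by
    have h1 : R⁻¹ = adjugate R :=
      Matrix.inv_eq_right_inv (by rw [Matrix.mul_adjugate, hd, one_smul])
    rw [← h1, Matrix.inv_eq_left_inv ho]
  rw [adjugate_fin_three] at hadj
  have c0 := congrFun (congrFun hadj 0) 0
  have c1 := congrFun (congrFun hadj 1) 1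
  have c2 := congrFun (congrFun hadj 2) 2
  have n0 := congrFun (congrFun ho 0) 0
  have n1 := congrFun (congrFun ho 1) 1
  have n2 := congrFun (congrFun ho 2) 2
  simp [Matrix.mul_apply, Fin.sum_univ_three, Matrix.one_apply, Matrix.transpose_apply] at n0 n1 n2
  simp [Matrix.transpose_apply] at c0 c1 c2
  simp only [Matrix.trace_fin_three]
  simp only [Matrix.mul_apply, Fin.sum_univ_three]
  simp [skew, vex, Pa, Matrix.sub_apply, Matrix.smul_apply, Matrix.neg_apply,
    Matrix.transpose_apply]
  linear_combination (k/2)*n0 + (k/2)*n1 + (k/2)*n2 + k*c0 + k*c1 + k*c2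

lemma trace_bounds (R : Matrix (Fin 3) (Fin 3) ℝ) (hR : SO3 R) :
    -3 ≤ R.trace ∧ R.trace ≤ 3 := by
  obtain ⟨ho, _⟩ := hR
  have n0 := congrFun (congrFun ho 0) 0
  have n1 := congrFun (congrFun ho 1) 1
  have n2 := congrFun (congrFun ho 2) 2
  simp [Matrix.mul_apply, Fin.sum_univ_three, Matrix.one_apply, Matrix.transpose_apply] at n0 n1 n2
  rw [Matrix.trace_fin_three]
  constructor <;>
    nlinarith [sq_nonneg (R 1 0), sq_nonneg (R 2 0), sq_nonneg (R 0 1), sq_nonneg (R 2 1),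
      sq_nonneg (R 0 2), sq_nonneg (R 1 2), sq_nonneg (R 0 0 - 1), sq_nonneg (R 0 0 + 1),
      sq_nonneg (R 1 1 - 1), sq_nonneg (R 1 1 + 1), sq_nonneg (R 2 2 - 1), sq_nonneg (R 2 2 + 1)]

/-- Invariance of the unstable set `U₀ = {R ∈ SO(3) : tr R = −1}` under the
error flow `R̃' = −k σ× R̃`: if `tr R̃(0) = −1`, then `tr R̃(t) = −1` for all
`t ≥ 0`. -/
theorem unstable_set_invariant (k : ℝ) (hk : 0 < k)
    (Rt : ℝ → Matrix (Fin 3) (Fin 3) ℝ)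
    (hSO : ∀ t, 0 ≤ t → SO3 (Rt t))
    (hderiv : ∀ t, 0 ≤ t → ∀ i j, HasDerivAt (fun s => Rt s i j)
      ((-(k • skew (vex (Pa (Rt t)))) * Rt t) i j) t)
    (h0 : (Rt 0).trace = -1) :
    ∀ t, 0 ≤ t → (Rt t).trace = -1 := by
  set g : ℝ → ℝ := fun s => (Rt s).trace + 1 with hg_def
  have hg : ∀ t, 0 ≤ t →
      HasDerivAt g (k/2 * (3 - (Rt t).trace) * g t) t := by
    intro t ht
    have h := (((hderiv t ht 0 0).add (hderiv t ht 1 1)).add (hderiv t ht 2 2)).add_const 1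
    have hval : ((-(k • skew (vex (Pa (Rt t)))) * Rt t) 0 0
        + (-(k • skew (vex (Pa (Rt t)))) * Rt t) 1 1
        + (-(k • skew (vex (Pa (Rt t)))) * Rt t) 2 2)
        = k/2 * (3 - (Rt t).trace) * g t := by
      have := trace_rhs_key k (Rt t) (hSO t ht)
      rw [Matrix.trace_fin_three] at this
      rw [this]
      simp only [hg_def]
      ring
    rw [hval] at h
    convert h using 2 with s
    case e'_4 => rfl
    case e'_5 => rfl
    rw [hg_def]
    simp [Matrix.trace_fin_three]
  intro t ht
  have hgron := norm_le_gronwallBound_of_norm_deriv_right_le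
    (f := g) (f' := fun x => k/2 * (3 - (Rt x).trace) * g x)
    (δ := 0) (K := 3*k) (ε := 0) (a := 0) (b := t)
    (fun x hx => ((hg x hx.1).continuousAt).continuousWithinAt)
    (fun x hx => (hg x hx.1).hasDerivWithinAt)
    (by simp [hg_def, h0])
    ?_ t ⟨ht, le_refl t⟩
  · have h0' : gronwallBound 0 (3*k) 0 (t - 0) = 0 := gronwallBound_ε0_δ0 _ _
    rw [h0'] at hgron
    have hz : g t = 0 := abs_nonpos_iff.mp (by rwa [Real.norm_eq_abs] at hgron)
    simp only [hg_def] at hz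
    linarith [hz]
  · intro x hx
    obtain ⟨hb1, hb2⟩ := trace_bounds (Rt x) (hSO x hx.1)
    rw [Real.norm_eq_abs, Real.norm_eq_abs, abs_mul, add_zero]
    have h1 : |k/2 * (3 - (Rt x).trace)| ≤ 3*k := by
      rw [abs_of_nonneg (by nlinarith)]
      nlinarith
    exact le_trans (mul_le_mul_of_nonneg_right h1 (abs_nonneg _)) le_rfl
end
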